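/- arXiv:2008.10288 — 2 statements merged into one kernel-verified Lean document; each statement's English description precedes it below -/
import Mathlib

section
/- Right multiplications Rᵢ, Rⱼ and the composition K = Rⱼ∘Rᵢ (i.e., x ↦ (x·i)·j) on the octonions 𝕆 ≅ ℝ⁸ form a hypercomplex structure: Rᵢ² = Rⱼ² = K² = -Id, Rᵢ∘Rⱼ = -Rⱼ∘Rᵢ, and K = Rⱼ∘Rᵢ satisfies K∘Rᵢ = Rⱼ (the quaternion relations hold). -/
noncomputable section

open Quaternion

/-- The octonions, via the Cayley–Dickson construction on the quaternions:
`x = h₁ + h₂e ↔ (h₁, h₂)`. -/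
abbrev Oct := ℍ[ℝ] × ℍ[ℝ]

/-- Cayley–Dickson multiplication: `(h₁+h₂e)(h₁'+h₂'e) = (h₁h₁' - h̄₂'h₂) + (h₂h̄₁' + h₂'h₁)e`. -/
def omul (x y : Oct) : Oct :=
  (x.1 * y.1 - star y.2 * x.2, x.2 * star y.1 + y.2 * x.1)

/-- The imaginary units i, j of ℍ ⊂ 𝕆. -/
def oi : Oct := (⟨0,1,0,0⟩, 0)
def oj : Oct := (⟨0,0,1,0⟩, 0)

/-- Right multiplications by i and j on 𝕆. -/
def Ri (x : Oct) : Oct := omul x oi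
def Rj (x : Oct) : Oct := omul x oj
/-- `K(x) = (x·i)·j`, the composition `Rⱼ∘Rᵢ`. -/
def Kq (x : Oct) : Oct := Rj (Ri x)

/-!
Right multiplication by a quaternion `u ∈ ℍ ⊂ 𝕆` acts on `𝕆 = ℍ ⊕ ℍe` as `(h₁, h₂) ↦ (h₁u, h₂ū)`,
i.e. by right multiplications in the associative algebra `ℍ` on each component. Since conjugation
preserves the relations `u² = -1` and `uv = -vu`, the operators `Rᵢ`, `Rⱼ` square to `-Id` and
anticommute; the relations for `K = Rⱼ ∘ Rᵢ` then follow formally, as in the quaternion group.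
-/

theorem omul_quaternion (x : Oct) (u : ℍ[ℝ]) : omul x (u, 0) = (x.1 * u, x.2 * star u) := by
  simp [omul]

theorem neg_omul (x y : Oct) : omul (-x) y = -omul x y := by
  simp only [omul, Prod.fst_neg, Prod.snd_neg, mul_neg, neg_mul, Prod.neg_mk]
  congr 1 <;> abel

theorem omul_omul_quaternion_of_mul_self_eq_neg_one {u : ℍ[ℝ]} (hu : u * u = -1) (x : Oct) :
    omul (omul x (u, 0)) (u, 0) = -x := by
  simp only [omul_quaternion, mul_assoc, ← star_mul, hu, star_neg, star_one, mul_neg_one]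
  rfl

theorem omul_omul_quaternion_comm_of_anticomm {u v : ℍ[ℝ]} (huv : u * v = -(v * u)) (x : Oct) :
    omul (omul x (u, 0)) (v, 0) = -omul (omul x (v, 0)) (u, 0) := by
  simp only [omul_quaternion, mul_assoc, ← star_mul, huv, star_neg, mul_neg, neg_neg, Prod.neg_mk]

theorem quaternion_i_mul_i : (⟨0, 1, 0, 0⟩ : ℍ[ℝ]) * ⟨0, 1, 0, 0⟩ = -1 := by
  ext <;> simp

theorem quaternion_j_mul_j : (⟨0, 0, 1, 0⟩ : ℍ[ℝ]) * ⟨0, 0, 1, 0⟩ = -1 := by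
  ext <;> simp

theorem quaternion_j_mul_i :
    (⟨0, 0, 1, 0⟩ : ℍ[ℝ]) * ⟨0, 1, 0, 0⟩ = -((⟨0, 1, 0, 0⟩ : ℍ[ℝ]) * ⟨0, 0, 1, 0⟩) := by
  ext <;> simp

theorem Ri_Ri (x : Oct) : Ri (Ri x) = -x :=
  omul_omul_quaternion_of_mul_self_eq_neg_one quaternion_i_mul_i x

theorem Rj_Rj (x : Oct) : Rj (Rj x) = -x :=
  omul_omul_quaternion_of_mul_self_eq_neg_one quaternion_j_mul_j x

theorem Ri_Rj (x : Oct) : Ri (Rj x) = -Rj (Ri x) :=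
  omul_omul_quaternion_comm_of_anticomm quaternion_j_mul_i x

theorem Rj_neg (x : Oct) : Rj (-x) = -Rj x := neg_omul x oj

theorem Kq_Kq (x : Oct) : Kq (Kq x) = -x := by
  simp only [Kq, Ri_Rj, Ri_Ri, Rj_neg, Rj_Rj, neg_neg]

theorem Ri_Kq (x : Oct) : Ri (Kq x) = Rj x := by
  rw [Kq, Ri_Rj, Ri_Ri, Rj_neg, neg_neg]

/-- `(Rᵢ, Rⱼ, K = Rⱼ∘Rᵢ)` is a hypercomplex structure on 𝕆 ≅ ℝ⁸:
all three square to `-Id`, `Rᵢ` and `Rⱼ` anticommute, and the quaternion relation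
`K ∘ Rᵢ = Rⱼ` holds (compositions read in diagrammatic order: `x ↦ Rᵢ(K x) = Rⱼ x`). -/
theorem octonion_right_mult_hypercomplex :
    (∀ x : Oct, Ri (Ri x) = -x) ∧
    (∀ x : Oct, Rj (Rj x) = -x) ∧
    (∀ x : Oct, Kq (Kq x) = -x) ∧
    (∀ x : Oct, Ri (Rj x) = - Rj (Ri x)) ∧
    (∀ x : Oct, Ri (Kq x) = Rj x) := by
  exact ⟨Ri_Ri, Rj_Rj, Kq_Kq, Ri_Rj, Ri_Kq⟩
end
end

section
/- With the ten 2-forms θ_{αβ} on ℝ⁸ being the Kähler forms of the complex structures I_{αβ} = Iα∘Iβ built from the quaternionic Pauli Clifford system, the left quaternionic 4-form satisfies Ω_L = -(1/2) Σ_{1≤α<β≤5} θ_{αβ}². -/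
noncomputable section

open Quaternion

/-- The exterior algebra of (the dual of) ℝ⁸; forms on ℝ⁸ ≅ ℍ². -/
abbrev Ext8 := ExteriorAlgebra ℝ (Fin 8 → ℝ)

/-- The coordinate 1-forms (0-indexed). -/
def dx (a : Fin 8) : Ext8 := ExteriorAlgebra.ι ℝ (Pi.single a 1)

def qi : ℍ[ℝ] := ⟨0,1,0,0⟩
def qj : ℍ[ℝ] := ⟨0,0,1,0⟩
def qk : ℍ[ℝ] := ⟨0,0,0,1⟩

/-- The Euclidean inner product on ℍ² ≅ ℝ⁸. -/
def ipH2 (x y : ℍ[ℝ] × ℍ[ℝ]) : ℝ :=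
  (x.1 * star y.1).re + (x.2 * star y.2).re

/-- The standard orthonormal basis `1, i, j, k, e, ie, je, ke` of ℍ² ≅ ℝ⁸. -/
def qe : Fin 8 → ℍ[ℝ] × ℍ[ℝ]
  | 0 => (1, 0) | 1 => (qi, 0) | 2 => (qj, 0) | 3 => (qk, 0)
  | 4 => (0, 1) | 5 => (0, qi) | 6 => (0, qj) | 7 => (0, qk)

/-- The Kähler 2-form `ω(X,Y) = ⟨JX,Y⟩` of an endomorphism `J` of ℍ² ≅ ℝ⁸,
as an element of the exterior algebra: `ω = Σ_{a<b} ⟨J e_a, e_b⟩ dx_a ∧ dx_b`. -/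
def kform (J : ℍ[ℝ] × ℍ[ℝ] → ℍ[ℝ] × ℍ[ℝ]) : Ext8 :=
  (1/2 : ℝ) • ∑ a : Fin 8, ∑ b : Fin 8, ipH2 (J (qe a)) (qe b) • (dx a * dx b)

/-- The five (right) quaternionic Pauli matrices on ℍ² ≅ ℝ⁸. -/
def qPauli : Fin 5 → ℍ[ℝ] × ℍ[ℝ] → ℍ[ℝ] × ℍ[ℝ]
  | 0 => fun x => (x.2, x.1)
  | 1 => fun x => (-(x.2 * qi), x.1 * qi)
  | 2 => fun x => (-(x.2 * qj), x.1 * qj)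
  | 3 => fun x => (-(x.2 * qk), x.1 * qk)
  | 4 => fun x => (x.1, -x.2)

/-- The Kähler form `θ_{αβ}` of the complex structure `I_{αβ} = Iα ∘ Iβ`. -/
def θ (α β : Fin 5) : Ext8 := kform (fun x => qPauli α (qPauli β x))

/-- Left multiplications by i, j, k on ℍ². -/
def Li (x : ℍ[ℝ] × ℍ[ℝ]) : ℍ[ℝ] × ℍ[ℝ] := (qi * x.1, qi * x.2)
def Lj (x : ℍ[ℝ] × ℍ[ℝ]) : ℍ[ℝ] × ℍ[ℝ] := (qj * x.1, qj * x.2)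
def Lk (x : ℍ[ℝ] × ℍ[ℝ]) : ℍ[ℝ] × ℍ[ℝ] := (qk * x.1, qk * x.2)

/-- The left quaternionic 4-form `Ω_L = ω_{L_i}² + ω_{L_j}² + ω_{L_k}²`. -/
def ΩL : Ext8 := (kform Li)^2 + (kform Lj)^2 + (kform Lk)^2


/-!
Each of the eleven complex structures `L_i, L_j, L_k, I_{αβ}` maps the orthonormal basis
`e_0, …, e_7` to itself up to sign, so its Kähler form is a sum `± dx_a ∧ dx_b ± … ` of four
terms with disjoint index pairs. Substituting these normal forms, both sides of the identity
expand into the basic 4-forms `dx_a ∧ dx_b ∧ dx_c ∧ dx_d` with `a < b < c < d`, and the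
coefficients agree.
-/

theorem Finset.sum_sum_smul_of_antisymm {ι R A : Type*} [Fintype ι] [LinearOrder ι] [Ring R]
    [AddCommGroup A] [Module R A] (c : ι → ι → R) {x : ι → ι → A}
    (hx : ∀ a b, x b a = -x a b) (hxx : ∀ a, x a a = 0) :
    ∑ a, ∑ b, c a b • x a b = ∑ a, ∑ b, if a < b then (c a b - c b a) • x a b else 0 := by
  have split_diag : ∀ a b, c a b • x a b =
      (if a < b then c a b • x a b else 0) + (if b < a then c a b • x a b else 0) := by
    intro a b
    rcases lt_trichotomy a b with h | rfl | h
    · simp [h, h.not_gt]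
    · simp [hxx]
    · simp [h, h.not_gt]
  rw [Finset.sum_congr rfl fun a _ => Finset.sum_congr rfl fun b _ => split_diag a b]
  simp only [Finset.sum_add_distrib]
  rw [Finset.sum_comm (f := fun a b => if b < a then c a b • x a b else 0),
    ← Finset.sum_add_distrib]
  refine Finset.sum_congr rfl fun a _ => ?_
  rw [← Finset.sum_add_distrib]
  refine Finset.sum_congr rfl fun b _ => ?_
  split_ifs
  · rw [hx a b, sub_smul, smul_neg, sub_eq_add_neg]
  · simp

theorem dx_mul_dx_comm (a b : Fin 8) : dx b * dx a = -(dx a * dx b) :=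
  eq_neg_of_add_eq_zero_left (ExteriorAlgebra.ι_add_mul_swap _ _)

theorem dx_mul_self (a : Fin 8) : dx a * dx a = 0 :=
  ExteriorAlgebra.ι_sq_zero _

/- The order hypotheses of the next two lemmas let `simp` use them to sort products of `dx`s. -/

theorem dx_mul_dx_of_lt {a b : Fin 8} (_ : b < a) : dx a * dx b = -(dx b * dx a) :=
  dx_mul_dx_comm b a

theorem dx_mul_dx_mul_of_lt {a b : Fin 8} (h : b < a) (x : Ext8) :
    dx a * (dx b * x) = -(dx b * (dx a * x)) := by
  rw [← mul_assoc, ← mul_assoc, dx_mul_dx_of_lt h, neg_mul]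

theorem kform_eq_sum_lt (J : ℍ[ℝ] × ℍ[ℝ] → ℍ[ℝ] × ℍ[ℝ]) :
    kform J = ∑ a, ∑ b, if a < b then
      ((ipH2 (J (qe a)) (qe b) - ipH2 (J (qe b)) (qe a)) / 2) • (dx a * dx b) else 0 := by
  rw [kform, Finset.sum_sum_smul_of_antisymm _ dx_mul_dx_comm dx_mul_self]
  simp_rw [Finset.smul_sum, smul_ite, smul_zero, smul_smul]
  congr! 4
  ring

@[simp] lemma qi_re : qi.re = 0 := rfl
@[simp] lemma qi_imI : qi.imI = 1 := rfl
@[simp] lemma qi_imJ : qi.imJ = 0 := rfl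
@[simp] lemma qi_imK : qi.imK = 0 := rfl
@[simp] lemma qj_re : qj.re = 0 := rfl
@[simp] lemma qj_imI : qj.imI = 0 := rfl
@[simp] lemma qj_imJ : qj.imJ = 1 := rfl
@[simp] lemma qj_imK : qj.imK = 0 := rfl
@[simp] lemma qk_re : qk.re = 0 := rfl
@[simp] lemma qk_imI : qk.imI = 0 := rfl
@[simp] lemma qk_imJ : qk.imJ = 0 := rfl
@[simp] lemma qk_imK : qk.imK = 1 := rfl

lemma kform_Li : kform Li = dx 0 * dx 1 + dx 2 * dx 3 + dx 4 * dx 5 + dx 6 * dx 7 := by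
  simp [kform_eq_sum_lt, Fin.sum_univ_eight, Li, qe, ipH2, Quaternion.re_mul, sub_eq_add_neg]

lemma kform_Lj : kform Lj = dx 0 * dx 2 - dx 1 * dx 3 + dx 4 * dx 6 - dx 5 * dx 7 := by
  simp [kform_eq_sum_lt, Fin.sum_univ_eight, Lj, qe, ipH2, Quaternion.re_mul, sub_eq_add_neg]

lemma kform_Lk : kform Lk = dx 0 * dx 3 + dx 1 * dx 2 + dx 4 * dx 7 + dx 5 * dx 6 := by
  simp [kform_eq_sum_lt, Fin.sum_univ_eight, Lk, qe, ipH2, Quaternion.re_mul, sub_eq_add_neg]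

lemma θ_0_1 : θ 0 1 = dx 0 * dx 1 - dx 2 * dx 3 - dx 4 * dx 5 + dx 6 * dx 7 := by
  simp [θ, kform_eq_sum_lt, Fin.sum_univ_eight, qPauli, qe, ipH2, Quaternion.re_mul, sub_eq_add_neg]

lemma θ_0_2 : θ 0 2 = dx 0 * dx 2 + dx 1 * dx 3 - dx 4 * dx 6 - dx 5 * dx 7 := by
  simp [θ, kform_eq_sum_lt, Fin.sum_univ_eight, qPauli, qe, ipH2, Quaternion.re_mul, sub_eq_add_neg]

lemma θ_0_3 : θ 0 3 = dx 0 * dx 3 - dx 1 * dx 2 - dx 4 * dx 7 + dx 5 * dx 6 := by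
  simp [θ, kform_eq_sum_lt, Fin.sum_univ_eight, qPauli, qe, ipH2, Quaternion.re_mul, sub_eq_add_neg]

lemma θ_0_4 : θ 0 4 = dx 0 * dx 4 + dx 1 * dx 5 + dx 2 * dx 6 + dx 3 * dx 7 := by
  simp [θ, kform_eq_sum_lt, Fin.sum_univ_eight, qPauli, qe, ipH2, Quaternion.re_mul, sub_eq_add_neg]

lemma θ_1_2 : θ 1 2 = dx 0 * dx 3 - dx 1 * dx 2 + dx 4 * dx 7 - dx 5 * dx 6 := by
  simp [θ, kform_eq_sum_lt, Fin.sum_univ_eight, qPauli, qe, ipH2, Quaternion.re_mul, sub_eq_add_neg]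

lemma θ_1_3 : θ 1 3 = -(dx 0 * dx 2) - dx 1 * dx 3 - dx 4 * dx 6 - dx 5 * dx 7 := by
  simp [θ, kform_eq_sum_lt, Fin.sum_univ_eight, qPauli, qe, ipH2, Quaternion.re_mul, sub_eq_add_neg]

lemma θ_1_4 : θ 1 4 = dx 0 * dx 5 - dx 1 * dx 4 - dx 2 * dx 7 + dx 3 * dx 6 := by
  simp [θ, kform_eq_sum_lt, Fin.sum_univ_eight, qPauli, qe, ipH2, Quaternion.re_mul, sub_eq_add_neg]

lemma θ_2_3 : θ 2 3 = dx 0 * dx 1 - dx 2 * dx 3 + dx 4 * dx 5 - dx 6 * dx 7 := by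
  simp [θ, kform_eq_sum_lt, Fin.sum_univ_eight, qPauli, qe, ipH2, Quaternion.re_mul, sub_eq_add_neg]

lemma θ_2_4 : θ 2 4 = dx 0 * dx 6 + dx 1 * dx 7 - dx 2 * dx 4 - dx 3 * dx 5 := by
  simp [θ, kform_eq_sum_lt, Fin.sum_univ_eight, qPauli, qe, ipH2, Quaternion.re_mul, sub_eq_add_neg]

lemma θ_3_4 : θ 3 4 = dx 0 * dx 7 - dx 1 * dx 6 + dx 2 * dx 5 - dx 3 * dx 4 := by
  simp [θ, kform_eq_sum_lt, Fin.sum_univ_eight, qPauli, qe, ipH2, Quaternion.re_mul, sub_eq_add_neg]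

/-- `Ω_L = -(1/2) Σ_{1≤α<β≤5} θ_{αβ}²`. -/
theorem OmegaL_from_theta :
    ΩL = -(1/2 : ℝ) •
      (θ 0 1 ^ 2 + θ 0 2 ^ 2 + θ 0 3 ^ 2 + θ 0 4 ^ 2 + θ 1 2 ^ 2 + θ 1 3 ^ 2
       + θ 1 4 ^ 2 + θ 2 3 ^ 2 + θ 2 4 ^ 2 + θ 3 4 ^ 2) := by
  rw [ΩL, kform_Li, kform_Lj, kform_Lk, θ_0_1, θ_0_2, θ_0_3, θ_0_4, θ_1_2, θ_1_3, θ_1_4,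
    θ_2_3, θ_2_4, θ_3_4]
  simp only [sq, sub_eq_add_neg, mul_add, add_mul, mul_assoc, mul_neg, neg_mul, neg_neg,
    dx_mul_dx_of_lt, dx_mul_dx_mul_of_lt, dx_mul_self, mul_zero, neg_zero, add_zero, Fin.reduceLT]
  module
end
end
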